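/- Let G and H be arbitrary graphs and D a minimal dominating set of H. Write D^P for the set of vertices of D having a private D-neighbor and D^I = D ∖ D^P. Then Γ(G □ H) ≥ |V(G)|·|D^P| + γ(G)·|D^I|. -/

import Mathlib

open SimpleGraph

variable {V : Type*} {W : Type*}

/-- `D` is a dominating set of `G`: every vertex outside `D` has a neighbor in `D`. -/
def IsDomSet (G : SimpleGraph V) (D : Set V) : Prop :=
  ∀ v ∉ D, ∃ u ∈ D, G.Adj u v

/-- `D` is a minimal dominating set: dominating, and no proper subset is dominating. -/
def IsMinDomSet (G : SimpleGraph V) (D : Set V) : Prop :=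
  IsDomSet G D ∧ ∀ D' ⊂ D, ¬ IsDomSet G D'

/-- The upper domination number `Γ(G)`: maximum size of a minimal dominating set. -/
noncomputable def upperDom (G : SimpleGraph V) : ℕ :=
  sSup {n | ∃ D : Set V, IsMinDomSet G D ∧ D.ncard = n}

/-- The domination number `γ(G)`: minimum size of a dominating set. -/
noncomputable def domNum (G : SimpleGraph V) : ℕ :=
  sInf {n | ∃ D : Set V, IsDomSet G D ∧ D.ncard = n}

/-- The set of vertices of `D` having a private `D`-neighbor. -/
def privSet (G : SimpleGraph V) (D : Set V) : Set V :=
  {v ∈ D | ∃ u, u ∉ D ∧ G.Adj v u ∧ ∀ w ∈ D, G.Adj w u → w = v}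

/-- `I` is an independent set of `G`. -/
def IsIndep (G : SimpleGraph V) (I : Set V) : Prop :=
  ∀ u ∈ I, ∀ v ∈ I, ¬ G.Adj u v

/-- `I` is a maximal independent set of `G`. -/
def IsMaxIndep (G : SimpleGraph V) (I : Set V) : Prop :=
  IsIndep G I ∧ ∀ J, IsIndep G J → I ⊆ J → J = I

/-- The independence number `α(G)`. -/
noncomputable def indepNum (G : SimpleGraph V) : ℕ :=
  sSup {n | ∃ I : Set V, IsIndep G I ∧ I.ncard = n}

/-- The star `K_{1,n}` on `Fin (n+1)` with center `0`. -/
def starGraph (n : ℕ) : SimpleGraph (Fin (n + 1)) :=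
  SimpleGraph.fromRel (fun i _ => i = 0)

/-- The graph `X_n`: two copies of `K_{n+1}` (on `u_0,…,u_n` and `v_0,…,v_n`)
joined by the matching edges `u_i v_i` for `i ≠ 0`. -/
def Xgraph (n : ℕ) : SimpleGraph (Fin (n + 1) ⊕ Fin (n + 1)) :=
  SimpleGraph.fromRel (fun x y => match x, y with
    | .inl _, .inl _ => True
    | .inr _, .inr _ => True
    | .inl i, .inr j => i = j ∧ i ≠ 0
    | _, _ => False)

/-- The graph `X_n'`: `X_n` with `u_0` deleted.  Vertices `inl i` represent
`u_{i+1}` (`i : Fin n`) and `inr j` represent `v_j` (`j : Fin (n+1)`); each side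
induces a complete graph and `u_{i+1}` is matched to `v_{i+1}`. -/
def Xgraph' (n : ℕ) : SimpleGraph (Fin n ⊕ Fin (n + 1)) :=
  SimpleGraph.fromRel (fun x y => match x, y with
    | .inl _, .inl _ => True
    | .inr _, .inr _ => True
    | .inl i, .inr j => (j : ℕ) = (i : ℕ) + 1
    | _, _ => False)

/-!
Extend a minimal dominating set `D` of `H` to the dominating set `V(G) × D` of `G □ H` and
shrink it to a minimal dominating set `M`. A vertex `(g, u)` with `u` a private `D`-neighbor of
`w` can only be dominated by `(g, w)`, so every column over `D^P` lies entirely in `M`. A vertex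
of `D^I` has no neighbor in `D` at all, so inside its column `M` must dominate on its own, which
takes at least `γ(G)` vertices.
-/

section Domination

variable {G : SimpleGraph V} {D : Set V}

theorem IsDomSet.exists_isMinDomSet_subset [Finite V] (hD : IsDomSet G D) :
    ∃ M ⊆ D, IsMinDomSet G M := by
  obtain ⟨M, hMD, hM⟩ := exists_minimal_le_of_wellFoundedLT (IsDomSet G) D hD
  exact ⟨M, hMD, hM.prop, fun M' hM'M hM' => hM'M.not_ge (hM.le_of_le hM' hM'M.le)⟩

theorem domNum_le_ncard (hD : IsDomSet G D) : domNum G ≤ D.ncard :=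
  Nat.sInf_le ⟨D, hD, rfl⟩

theorem IsMinDomSet.ncard_le_upperDom [Finite V] (hD : IsMinDomSet G D) :
    D.ncard ≤ upperDom G := by
  refine le_csSup ⟨Nat.card V, ?_⟩ ⟨D, hD, rfl⟩
  rintro _ ⟨D', -, rfl⟩
  exact Set.ncard_le_card D'

/-- Otherwise `D \ {v}` would still dominate: `v` by `w`, and everything else because `v` has no
private neighbor. -/
theorem IsMinDomSet.not_adj_of_notMem_privSet (hD : IsMinDomSet G D) {v w : V} (hv : v ∈ D)
    (hvP : v ∉ privSet G D) (hw : w ∈ D) : ¬ G.Adj w v := by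
  intro hwv
  refine hD.2 (D \ {v}) (Set.sdiff_singleton_ssubset.mpr hv) fun x hx => ?_
  by_cases hxv : x = v
  · subst hxv
    exact ⟨w, ⟨hw, hwv.ne⟩, hwv⟩
  have hxD : x ∉ D := fun hxD => hx ⟨hxD, hxv⟩
  obtain ⟨u, huD, hux⟩ := hD.1 x hxD
  by_cases huv : u = v
  · subst huv
    obtain ⟨w', hw'D, hw'x, hw'u⟩ : ∃ w' ∈ D, G.Adj w' x ∧ w' ≠ u := by
      by_contra! h
      exact hvP ⟨hv, x, hxD, hux, h⟩
    exact ⟨w', ⟨hw'D, hw'u⟩, hw'x⟩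
  · exact ⟨u, ⟨huD, huv⟩, hux⟩

end Domination

section BoxProd

variable {G : SimpleGraph V} {H : SimpleGraph W} {D : Set W} {M : Set (V × W)}

theorem IsDomSet.univ_prod (hD : IsDomSet H D) : IsDomSet (G □ H) (Set.univ ×ˢ D) := by
  rintro ⟨g, v⟩ hgv
  obtain ⟨w, hwD, hwv⟩ := hD v fun hv => hgv ⟨trivial, hv⟩
  exact ⟨(g, w), ⟨trivial, hwD⟩, boxProd_adj.mpr (Or.inr ⟨hwv, rfl⟩)⟩

theorem IsDomSet.mk_mem_of_mem_privSet (hM : IsDomSet (G □ H) M) (hMD : M ⊆ Set.univ ×ˢ D)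
    {w : W} (hw : w ∈ privSet H D) (g : V) : (g, w) ∈ M := by
  obtain ⟨-, u, huD, hwu, hpriv⟩ := hw
  obtain ⟨⟨g', w'⟩, hm, hadj⟩ := hM (g, u) fun hu => huD (hMD hu).2
  rcases boxProd_adj.mp hadj with ⟨-, rfl⟩ | ⟨hw'u, rfl : g' = g⟩
  · exact absurd (hMD hm).2 huD
  · rwa [← hpriv w' (hMD hm).2 hw'u]

theorem IsDomSet.isDomSet_fiber (hM : IsDomSet (G □ H) M) (hMD : M ⊆ Set.univ ×ˢ D)
    (hD : IsMinDomSet H D) {w : W} (hw : w ∈ D \ privSet H D) :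
    IsDomSet G {g | (g, w) ∈ M} := by
  intro g hg
  obtain ⟨⟨g', w'⟩, hm, hadj⟩ := hM (g, w) hg
  rcases boxProd_adj.mp hadj with ⟨hg'g, rfl : w' = w⟩ | ⟨hw'w, -⟩
  · exact ⟨g', hm, hg'g⟩
  · exact absurd hw'w (hD.not_adj_of_notMem_privSet hw.1 hw.2 (hMD hm).2)

end BoxProd

theorem ncard_eq_sum_ncard_fiber [Finite V] [Fintype W] (S : Set (V × W)) :
    S.ncard = ∑ w, {v | (v, w) ∈ S}.ncard := by
  classical
  have := Fintype.ofFinite V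
  rw [Set.ncard_eq_toFinset_card',
    Finset.card_eq_sum_card_fiberwise (f := Prod.snd) (t := .univ) fun _ _ => Finset.mem_univ _]
  refine Finset.sum_congr rfl fun w _ => ?_
  rw [← Set.ncard_coe_finset,
    ← Set.ncard_image_of_injective {v | (v, w) ∈ S} (Prod.mk_left_injective w)]
  congr 1
  ext ⟨v, w'⟩
  aesop

theorem mul_ncard_add_mul_ncard_le_sum [Fintype W] (f : W → ℕ) {A B : Set W}
    (hAB : Disjoint A B) {a b : ℕ} (ha : ∀ w ∈ A, a ≤ f w) (hb : ∀ w ∈ B, b ≤ f w) :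
    a * A.ncard + b * B.ncard ≤ ∑ w, f w := by
  classical
  rw [Set.ncard_eq_toFinset_card', Set.ncard_eq_toFinset_card']
  calc a * A.toFinset.card + b * B.toFinset.card
      ≤ ∑ w ∈ A.toFinset, f w + ∑ w ∈ B.toFinset, f w := by
        rw [mul_comm a, mul_comm b, ← smul_eq_mul, ← smul_eq_mul]
        exact add_le_add (Finset.card_nsmul_le_sum _ _ _ (by simpa using ha))
          (Finset.card_nsmul_le_sum _ _ _ (by simpa using hb))
    _ = ∑ w ∈ A.toFinset ∪ B.toFinset, f w :=
        (Finset.sum_union (Set.disjoint_toFinset.mpr hAB)).symm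
    _ ≤ ∑ w, f w := Finset.sum_le_univ_sum_of_nonneg fun _ => Nat.zero_le _

theorem stmt_17 [Fintype V] [Fintype W] (G : SimpleGraph V) (H : SimpleGraph W)
    (D : Set W) (hD : IsMinDomSet H D) :
    upperDom (G.boxProd H) ≥
      Fintype.card V * (privSet H D).ncard + domNum G * (D \ privSet H D).ncard := by
  obtain ⟨M, hMD, hM⟩ := (hD.1.univ_prod (G := G)).exists_isMinDomSet_subset
  calc Fintype.card V * (privSet H D).ncard + domNum G * (D \ privSet H D).ncard
      ≤ ∑ w, {g | (g, w) ∈ M}.ncard := by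
        refine mul_ncard_add_mul_ncard_le_sum _ Set.disjoint_sdiff_right (fun w hw => ?_)
          fun w hw => domNum_le_ncard (hM.1.isDomSet_fiber hMD hD hw)
        rw [Set.eq_univ_of_forall (s := {g | (g, w) ∈ M}) (hM.1.mk_mem_of_mem_privSet hMD hw),
          Set.ncard_univ, Nat.card_eq_fintype_card]
    _ = M.ncard := (ncard_eq_sum_ncard_fiber M).symm
    _ ≤ upperDom (G □ H) := hM.ncard_le_upperDom
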